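/- arXiv:1512.02458 — 2 statements merged into one kernel-verified Lean document; each statement's English description precedes it below -/
import Mathlib

section
/- Let γ be a consistent family of grafts for a tree T, each graft in γ having bounded chains, and let H = hybr(T,γ). Then for every branch B of H, the set B ∩ supp(T,γ) is H-cofinal in B: every element of B lies below some element of B ∩ supp(T,γ). Moreover, for any G ∈ γ with B ∩ nodes(G) ≠ ∅, the set B ∩ nodes(G) is a branch of G. -/
universe u u' v

/-- A set-theoretic tree: a strict partial order on a set of nodes in which
the set of strict predecessors of every node is linearly ordered and
well-founded (i.e. well-ordered). -/
structure STree (α : Type u) where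
  nodes : Set α
  lt : α → α → Prop
  lt_mem_left : ∀ {x y}, lt x y → x ∈ nodes
  lt_mem_right : ∀ {x y}, lt x y → y ∈ nodes
  lt_irrefl : ∀ x, ¬ lt x x
  lt_trans : ∀ {x y z}, lt x y → lt y z → lt x z
  pred_linear : ∀ {x v w}, lt v x → lt w x → lt v w ∨ v = w ∨ lt w v
  pred_wf : ∀ {x : α} (A : Set α), (∀ a ∈ A, lt a x) → A.Nonempty →
      ∃ m ∈ A, ∀ a ∈ A, ¬ lt a m

namespace STree

variable {α : Type u} {α' : Type u'} {β : Type v}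

/-- The associated (non-strict) order, restricted to nodes. -/
def le (T : STree α) (x y : α) : Prop := T.lt x y ∨ (x = y ∧ x ∈ T.nodes)

def IsChain (T : STree α) (C : Set α) : Prop :=
  C ⊆ T.nodes ∧ ∀ x ∈ C, ∀ y ∈ C, T.le x y ∨ T.le y x

/-- A branch is a ⊆-maximal chain. -/
def IsBranch (T : STree α) (B : Set α) : Prop :=
  T.IsChain B ∧ ∀ C, T.IsChain C → B ⊆ C → B = C

/-- Two nodes are incomparable. -/
def Incomp (T : STree α) (x y : α) : Prop :=
  x ∈ T.nodes ∧ y ∈ T.nodes ∧ ¬ T.le x y ∧ ¬ T.le y x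

/-- `s` is a son (immediate successor) of `x`. -/
def IsSon (T : STree α) (x s : α) : Prop :=
  T.lt x s ∧ ¬ ∃ v, T.lt x v ∧ T.lt v s

def sons (T : STree α) (x : α) : Set α := {s | T.IsSon x s}

def IsMax (T : STree α) (m : α) : Prop := m ∈ T.nodes ∧ ∀ v, ¬ T.lt m v

def maxNodes (T : STree α) : Set α := {m | T.IsMax m}

def minNodes (T : STree α) : Set α := {m | m ∈ T.nodes ∧ ∀ v, ¬ T.lt v m}

/-- `r` is the least node of `T`. -/
def IsRoot (T : STree α) (r : α) : Prop := r ∈ T.nodes ∧ ∀ x ∈ T.nodes, T.le r x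

def roots (T : STree α) : Set α := {r | T.IsRoot r}

/-- The strict predecessors of a node. -/
def pred (T : STree α) (x : α) : Set α := {v | T.lt v x}

/-- `{v : v ≤ m}`. -/
def below (T : STree α) (m : α) : Set α := {v | T.le v m}

/-- `{v : v ≥ m}`. -/
def above (T : STree α) (m : α) : Set α := {v | T.le m v}

/-- Every nonempty chain has an upper bound among the nodes. -/
def BoundedChains (T : STree α) : Prop :=
  ∀ C, T.IsChain C → C.Nonempty → ∃ z ∈ T.nodes, ∀ c ∈ C, T.le c z

/-- Height at most ω: each node has only finitely many strict predecessors. -/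
def HeightLeOmega (T : STree α) : Prop := ∀ x ∈ T.nodes, (T.pred x).Finite

/-- No maximal nodes. -/
def NoMax (T : STree α) : Prop := ∀ m ∈ T.nodes, ∃ v, T.lt m v

/-- Every non-maximal node has exactly ℵ₀ sons. -/
def Aleph0Branching (T : STree α) : Prop :=
  ∀ x ∈ T.nodes, ¬ T.IsMax x → (T.sons x).Countable ∧ (T.sons x).Infinite

/-- Every non-maximal node has exactly κ sons. -/
def Branching (T : STree α) (κ : Cardinal.{u}) : Prop :=
  ∀ x ∈ T.nodes, ¬ T.IsMax x → Cardinal.mk (T.sons x) = κ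

/-- The strict order (proper initial segment) on finite sequences of naturals. -/
def listLt (x y : List ℕ) : Prop := x <+: y ∧ x ≠ y

/-- `T` is order-isomorphic to the tree `(ℕ^{<ω}, ⊂)` of all finite sequences of
naturals ordered by proper extension. -/
def IsoToSeqTree (T : STree α) : Prop :=
  ∃ f : α → List ℕ, Set.BijOn f T.nodes Set.univ ∧
    ∀ x ∈ T.nodes, ∀ y ∈ T.nodes, (T.lt x y ↔ listLt (f x) (f y))

/-! ### Foliage trees: a tree together with a leaf (a set) at each node. -/

/-- Larger nodes have smaller leaves. -/
def Nonincreasing (T : STree α) (leaf : α → Set β) : Prop :=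
  ∀ {x y}, T.le x y → leaf y ⊆ leaf x

/-- Incomparable nodes have disjoint leaves. -/
def Splittable (T : STree α) (leaf : α → Set β) : Prop :=
  ∀ {x y}, T.Incomp x y → leaf x ∩ leaf y = ∅

/-- The leaf of each non-maximal node is the disjoint union of the leaves of its sons. -/
def LocallyStrict (T : STree α) (leaf : α → Set β) : Prop :=
  ∀ x ∈ T.nodes, ¬ T.IsMax x →
    (leaf x = ⋃ s ∈ T.sons x, leaf s) ∧
    (∀ s ∈ T.sons x, ∀ s' ∈ T.sons x, s ≠ s' → leaf s ∩ leaf s' = ∅)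

/-- The union of all leaves. -/
def flesh (T : STree α) (leaf : α → Set β) : Set β := ⋃ x ∈ T.nodes, leaf x

/-- The intersection of leaves over a set of nodes. -/
def fruit (leaf : α → Set β) (A : Set α) : Set β := ⋂ x ∈ A, leaf x

/-- The union, over all branches, of the intersections of leaves along a branch. -/
def yield (T : STree α) (leaf : α → Set β) : Set β :=
  ⋃ B ∈ {B | T.IsBranch B}, fruit leaf B

/-- The intersection of leaves along any branch is a singleton. -/
def StrictBranches (T : STree α) (leaf : α → Set β) : Prop :=
  T.nodes.Nonempty ∧ ∀ B, T.IsBranch B → ∃ q, fruit leaf B = {q}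

/-- All leaves are open. -/
def OpenLeaves (T : STree α) [TopologicalSpace β] (leaf : α → Set β) : Prop :=
  ∀ x ∈ T.nodes, IsOpen (leaf x)

/-- The nodes whose leaf contains `p`. -/
def scope (T : STree α) (leaf : α → Set β) (p : β) : Set α :=
  {y | y ∈ T.nodes ∧ p ∈ leaf y}

/-- The family of unions of leaves over cofinite subsets of the sons of `z`. -/
def shoot (T : STree α) (leaf : α → Set β) (z : α) : Set (Set β) :=
  {U | ∃ C ⊆ T.sons z, (T.sons z \ C).Finite ∧ U = ⋃ s ∈ C, leaf s}

/-- `γ` π-refines `δ`: every nonempty member of `δ` contains a nonempty member of `γ`. -/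
def PiRefines (γ δ : Set (Set β)) : Prop :=
  ∀ D ∈ δ, D ≠ ∅ → ∃ G ∈ γ, G ≠ ∅ ∧ G ⊆ D

/-- The foliage tree grows into the subspace `Y`: for every `p ∈ Y` and every
neighbourhood `U` of `p` in the subspace `Y`, some `z ∈ scope(p)` has
`shoot(z)` π-refining `{U}`. -/
def GrowsInto (T : STree α) (leaf : α → Set β) [TopologicalSpace β] (Y : Set β) : Prop :=
  ∀ p ∈ Y, ∀ U : Set β, U ⊆ Y → U ∈ nhdsWithin p Y →
    ∃ z ∈ T.scope leaf p, PiRefines (T.shoot leaf z) {U}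

/-- `H` shoots into `F`. -/
def ShootsInto (H : STree α) (leafH : α → Set β) (F : STree α') (leafF : α' → Set β) : Prop :=
  ∀ p ∈ flesh H leafH, ∀ y ∈ F.scope leafF p,
    ∃ x ∈ H.scope leafH p, PiRefines (H.shoot leafH x) (F.shoot leafF y)

/-! ### Grafts and hybrids. -/

/-- The implant of a graft: its nodes other than the root and the maximal nodes. -/
def implant (G : STree α) : Set α := G.nodes \ (G.roots ∪ G.maxNodes)

/-- `G` is a graft for the tree `T`. -/
def IsGraft (T G : STree α) : Prop :=
  (∃ x ∈ G.nodes, ∃ y ∈ G.nodes, x ≠ y) ∧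
  (∃ r, G.IsRoot r) ∧
  G.roots ⊆ T.nodes ∧
  G.maxNodes ⊆ T.nodes ∧
  (∀ r ∈ G.roots, ∀ m ∈ G.maxNodes, T.lt r m) ∧
  (∀ m ∈ G.maxNodes, ∀ m' ∈ G.maxNodes, m ≠ m' → T.Incomp m m') ∧
  implant G ∩ T.nodes = ∅

/-- The explant of `T` and `G`: the strict `T`-successors of the root of `G`
not lying above any maximal node of `G`. -/
def explant (T G : STree α) : Set α :=
  {v | ∃ r ∈ G.roots, T.lt r v} \ ⋃ m ∈ G.maxNodes, T.above m

/-- A consistent family of grafts for `T`. -/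
def ConsistentGrafts (T : STree α) (γ : Set (STree α)) : Prop :=
  (∀ G ∈ γ, IsGraft T G) ∧
  (∀ D ∈ γ, ∀ E ∈ γ, D ≠ E → implant D ∩ implant E = ∅) ∧
  (∀ D ∈ γ, ∀ E ∈ γ, D ≠ E → ∀ rD ∈ D.roots, ∀ rE ∈ E.roots,
      T.Incomp rD rE ∨ (∃ m ∈ E.maxNodes, T.le m rD) ∨ (∃ m ∈ D.maxNodes, T.le m rE))

/-- The support of `T` for `γ`. -/
def supp (T : STree α) (γ : Set (STree α)) : Set α :=
  T.nodes \ ⋃ G ∈ γ, explant T G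

/-- The node set of the hybrid of `T` and `γ`. -/
def hybridNodes (T : STree α) (γ : Set (STree α)) : Set α :=
  supp T γ ∪ ⋃ G ∈ γ, implant G

/-- The union of `<_T` and the `<_G` (`G ∈ γ`), restricted to the hybrid nodes. -/
def hybridBase (T : STree α) (γ : Set (STree α)) (x y : α) : Prop :=
  x ∈ hybridNodes T γ ∧ y ∈ hybridNodes T γ ∧ (T.lt x y ∨ ∃ G ∈ γ, G.lt x y)

/-- The hybrid order: the transitive closure of `hybridBase`. -/
def hybridLt (T : STree α) (γ : Set (STree α)) (x y : α) : Prop :=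
  Relation.TransGen (hybridBase T γ) x y

/-! ### Foliage grafts and the foliage hybrid. -/

/-- `(G, leafG)` is a foliage graft for the nonincreasing foliage tree `(T, leafF)`. -/
def IsFGraft (T : STree α) (leafF : α → Set β) (G : STree α) (leafG : α → Set β) : Prop :=
  Nonincreasing G leafG ∧ IsGraft T G ∧
  (∀ r ∈ G.roots, leafG r ⊆ leafF r) ∧
  (∀ m ∈ G.maxNodes, leafG m = leafF m)

/-- The cut from `(T, leafF)` by the foliage graft `(G, leafG)`. -/
def cut (leafF : α → Set β) (G : STree α) (leafG : α → Set β) : Set β :=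
  ⋃ r ∈ G.roots, leafF r \ leafG r

/-- A consistent family of foliage grafts for `(T, leafF)`. -/
def ConsistentFGrafts (T : STree α) (leafF : α → Set β)
    (φ : Set (STree α × (α → Set β))) : Prop :=
  (∀ p ∈ φ, IsFGraft T leafF p.1 p.2) ∧
  (∀ p ∈ φ, ∀ q ∈ φ, p ≠ q → p.1 ≠ q.1) ∧
  ConsistentGrafts T (Prod.fst '' φ)

/-- The loss of `(T, leafF)` on `φ`. -/
def loss (leafF : α → Set β) (φ : Set (STree α × (α → Set β))) : Set β :=
  ⋃ p ∈ φ, cut leafF p.1 p.2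

/-! ### The Baire space and the standard foliage tree. -/

/-- The basic clopen set of the Baire space determined by a finite sequence. -/
def Scyl (x : List ℕ) : Set (ℕ → ℕ) := {p | ∀ i : Fin x.length, p i.1 = x.get i}

/-- A π-dense subset of the Baire space. -/
def PiDense (A : Set (ℕ → ℕ)) : Prop :=
  ∀ y : List ℕ, {n : ℕ | Scyl (y ++ [n]) ⊆ A}.Infinite

end STree

/-!
Every node of the hybrid has a shadow in `T`: itself if it is a node of `T`, the root of its graft
if it lies in an implant, and the hybrid order is monotone for shadows. Since the roots of a graft
`G` lie below its maximal nodes, a hybrid path that leaves `G` does so through a maximal node of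
`G` and never comes back. So on the nodes of `G` the hybrid order is the order of `G`, and a node
of `G` comparable in `G` with all of `B ∩ nodes(G)` is comparable in `H` with all of `B`, hence
lies in `B`: this makes `B ∩ nodes(G)` a branch of `G`. An upper bound of that branch, which
exists as chains of `G` are bounded, is then its maximum and a maximal node of `G`, and maximal
nodes of grafts lie in `supp(T,γ)`.
-/

namespace STree

variable {α : Type u}

section Order

variable (T : STree α) {x y z r m : α}

theorem le_refl (hx : x ∈ T.nodes) : T.le x x := Or.inr ⟨rfl, hx⟩

theorem le_of_lt (h : T.lt x y) : T.le x y := Or.inl h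

theorem mem_nodes_of_le_left (h : T.le x y) : x ∈ T.nodes :=
  h.elim T.lt_mem_left fun h => h.2

theorem lt_of_le_of_lt (h₁ : T.le x y) (h₂ : T.lt y z) : T.lt x z := by
  rcases h₁ with h₁ | ⟨rfl, _⟩
  exacts [T.lt_trans h₁ h₂, h₂]

theorem lt_of_lt_of_le (h₁ : T.lt x y) (h₂ : T.le y z) : T.lt x z := by
  rcases h₂ with h₂ | ⟨rfl, _⟩
  exacts [T.lt_trans h₁ h₂, h₁]

theorem le_trans (h₁ : T.le x y) (h₂ : T.le y z) : T.le x z := by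
  rcases h₁ with h₁ | ⟨rfl, _⟩
  exacts [Or.inl (T.lt_of_lt_of_le h₁ h₂), h₂]

theorem lt_of_le_of_ne (h : T.le x y) (hne : x ≠ y) : T.lt x y :=
  h.resolve_right fun h => hne h.1

theorem le_or_le_of_le_of_le (hx : T.le x z) (hy : T.le y z) : T.le x y ∨ T.le y x := by
  rcases hx with hx | ⟨rfl, _⟩
  · rcases hy with hy | ⟨rfl, _⟩
    · rcases T.pred_linear hx hy with h | h | h
      exacts [Or.inl (Or.inl h), Or.inl (Or.inr ⟨h, T.lt_mem_left hx⟩), Or.inr (Or.inl h)]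
    · exact Or.inl (Or.inl hx)
  · exact Or.inr hy

theorem eq_of_mem_roots (hr : r ∈ T.roots) (hy : y ∈ T.roots) : r = y := by
  by_contra hne
  exact T.lt_irrefl r (T.lt_trans (T.lt_of_le_of_ne (hr.2 y hy.1) hne)
    (T.lt_of_le_of_ne (hy.2 r hr.1) (Ne.symm hne)))

theorem not_lt_of_mem_roots (hr : r ∈ T.roots) : ¬ T.lt x r := fun h =>
  T.lt_irrefl r (T.lt_of_le_of_lt (hr.2 x (T.lt_mem_left h)) h)

theorem eq_of_mem_maxNodes_of_le (hm : m ∈ T.maxNodes) (h : T.le m x) : x = m := by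
  rcases h with h | ⟨rfl, _⟩
  exacts [absurd h (hm.2 x), rfl]

end Order

section Branch

variable {T : STree α} {B : Set α} {x z : α}

theorem IsBranch.mem_of_forall_le_or_le (hB : T.IsBranch B) (hx : x ∈ T.nodes)
    (hcomp : ∀ b ∈ B, T.le b x ∨ T.le x b) : x ∈ B := by
  have hchain : T.IsChain (insert x B) := by
    refine ⟨Set.insert_subset hx hB.1.1, ?_⟩
    rintro a (rfl | ha) b (rfl | hb)
    · exact Or.inl (T.le_refl hx)
    · exact (hcomp b hb).symm
    · exact hcomp a ha
    · exact hB.1.2 a ha b hb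
  exact (hB.2 _ hchain (Set.subset_insert x B)) ▸ Set.mem_insert x B

theorem IsBranch.mem_of_le (hB : T.IsBranch B) (hz : z ∈ B) (hxz : T.le x z) : x ∈ B :=
  hB.mem_of_forall_le_or_le (T.mem_nodes_of_le_left hxz) fun b hb =>
    (hB.1.2 b hb z hz).elim (fun hbz => T.le_or_le_of_le_of_le hbz hxz)
      fun hzb => Or.inr (T.le_trans hxz hzb)

theorem IsBranch.mem_maxNodes_of_forall_le (hB : T.IsBranch B) (hz : z ∈ T.nodes)
    (hub : ∀ b ∈ B, T.le b z) : z ∈ B ∧ z ∈ T.maxNodes := by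
  have hmem : ∀ {w}, w ∈ T.nodes → (∀ b ∈ B, T.le b w) → w ∈ B := fun hw hwub =>
    hB.mem_of_forall_le_or_le hw fun b hb => Or.inl (hwub b hb)
  refine ⟨hmem hz hub, hz, fun v hzv => T.lt_irrefl z (T.lt_of_lt_of_le hzv (hub v ?_))⟩
  exact hmem (T.lt_mem_right hzv) fun b hb => T.le_trans (hub b hb) (T.le_of_lt hzv)

end Branch

section Graft

variable {T G G' : STree α} {γ : Set (STree α)} {u r m m' : α}

theorem IsGraft.exists_root (hG : IsGraft T G) : ∃ r, r ∈ G.roots := hG.2.1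

theorem IsGraft.roots_subset (hG : IsGraft T G) : G.roots ⊆ T.nodes := hG.2.2.1

theorem IsGraft.maxNodes_subset (hG : IsGraft T G) : G.maxNodes ⊆ T.nodes := hG.2.2.2.1

theorem IsGraft.lt_of_mem_roots_of_mem_maxNodes (hG : IsGraft T G) (hr : r ∈ G.roots)
    (hm : m ∈ G.maxNodes) : T.lt r m :=
  hG.2.2.2.2.1 r hr m hm

theorem IsGraft.incomp_of_mem_maxNodes (hG : IsGraft T G) (hm : m ∈ G.maxNodes)
    (hm' : m' ∈ G.maxNodes) (hne : m ≠ m') : T.Incomp m m' :=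
  hG.2.2.2.2.2.1 m hm m' hm' hne

theorem IsGraft.not_mem_nodes_of_mem_implant (hG : IsGraft T G) (hu : u ∈ implant G) :
    u ∉ T.nodes := fun huT =>
  Set.eq_empty_iff_forall_notMem.1 hG.2.2.2.2.2.2 u ⟨hu, huT⟩

theorem mem_roots_or_mem_implant_or_mem_maxNodes (hu : u ∈ G.nodes) :
    u ∈ G.roots ∨ u ∈ implant G ∨ u ∈ G.maxNodes := by
  by_cases hr : u ∈ G.roots
  · exact Or.inl hr
  by_cases hm : u ∈ G.maxNodes
  · exact Or.inr (Or.inr hm)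
  · exact Or.inr (Or.inl ⟨hu, fun h => h.elim hr hm⟩)

theorem IsGraft.mem_roots_of_mem_nodes (hG : IsGraft T G) (hu : u ∈ G.nodes)
    (hm : u ∉ G.maxNodes) (huT : u ∈ T.nodes) : u ∈ G.roots := by
  rcases mem_roots_or_mem_implant_or_mem_maxNodes hu with hr | hi | hm'
  exacts [hr, absurd huT (hG.not_mem_nodes_of_mem_implant hi), absurd hm' hm]

theorem IsGraft.mem_implant_of_mem_nodes (hG : IsGraft T G) (hu : u ∈ G.nodes)
    (hm : u ∉ G.maxNodes) (huT : u ∉ T.nodes) : u ∈ implant G :=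
  ⟨hu, fun h => h.elim (fun hr => huT (hG.roots_subset hr)) hm⟩

theorem ConsistentGrafts.isGraft (hγ : ConsistentGrafts T γ) (hG : G ∈ γ) : IsGraft T G :=
  hγ.1 G hG

theorem ConsistentGrafts.eq_of_mem_implant (hγ : ConsistentGrafts T γ) (hG : G ∈ γ)
    (hG' : G' ∈ γ) (hu : u ∈ implant G) (hu' : u ∈ implant G') : G = G' := by
  by_contra hne
  exact Set.eq_empty_iff_forall_notMem.1 (hγ.2.1 G hG G' hG' hne) u ⟨hu, hu'⟩

theorem ConsistentGrafts.eq_of_mem_roots (hγ : ConsistentGrafts T γ) (hG : G ∈ γ)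
    (hG' : G' ∈ γ) (hr : r ∈ G.roots) (hr' : r ∈ G'.roots) : G = G' := by
  by_contra hne
  rcases hγ.2.2 G hG G' hG' hne r hr r hr' with hinc | ⟨m, hm, hle⟩ | ⟨m, hm, hle⟩
  · exact hinc.2.2.1 (T.le_refl hinc.1)
  · exact T.lt_irrefl r
      (T.lt_of_lt_of_le ((hγ.isGraft hG').lt_of_mem_roots_of_mem_maxNodes hr' hm) hle)
  · exact T.lt_irrefl r
      (T.lt_of_lt_of_le ((hγ.isGraft hG).lt_of_mem_roots_of_mem_maxNodes hr hm) hle)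

end Graft

section Hybrid

variable {T G : STree α} {γ : Set (STree α)} {x y z : α}

theorem mem_supp_iff : x ∈ supp T γ ↔ x ∈ T.nodes ∧
    ∀ E ∈ γ, ∀ r ∈ E.roots, T.lt r x → ∃ m ∈ E.maxNodes, T.le m x := by
  simp only [supp, explant, above, Set.mem_sdiff, Set.mem_iUnion, Set.mem_ofPred_eq, not_exists,
    not_and]
  grind

theorem ConsistentGrafts.mem_supp_of_mem_hybridNodes (hγ : ConsistentGrafts T γ)
    (hz : z ∈ hybridNodes T γ) (hzT : z ∈ T.nodes) : z ∈ supp T γ := by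
  refine hz.resolve_right fun hi => ?_
  obtain ⟨E, hE, hzE⟩ := Set.mem_iUnion₂.1 hi
  exact (hγ.isGraft hE).not_mem_nodes_of_mem_implant hzE hzT

theorem ConsistentGrafts.roots_subset_supp (hγ : ConsistentGrafts T γ) (hG : G ∈ γ) :
    G.roots ⊆ supp T γ := by
  intro r hr
  refine mem_supp_iff.2 ⟨(hγ.isGraft hG).roots_subset hr, fun E hE rE hrE hlt => ?_⟩
  by_cases hEG : E = G
  · subst hEG
    exact absurd (E.eq_of_mem_roots hr hrE ▸ hlt) (T.lt_irrefl r)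
  rcases hγ.2.2 G hG E hE (Ne.symm hEG) r hr rE hrE with hinc | hle | ⟨m, hm, hle⟩
  · exact absurd (T.le_of_lt hlt) hinc.2.2.2
  · exact hle
  · exact absurd (T.lt_trans ((hγ.isGraft hG).lt_of_mem_roots_of_mem_maxNodes hr hm)
      (T.lt_of_le_of_lt hle hlt)) (T.lt_irrefl r)

theorem ConsistentGrafts.maxNodes_subset_supp (hγ : ConsistentGrafts T γ) (hG : G ∈ γ) :
    G.maxNodes ⊆ supp T γ := by
  intro m hm
  have hgraft := hγ.isGraft hG
  refine mem_supp_iff.2 ⟨hgraft.maxNodes_subset hm, fun E hE rE hrE hlt => ?_⟩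
  by_cases hEG : E = G
  · exact ⟨m, hEG ▸ hm, T.le_refl (hgraft.maxNodes_subset hm)⟩
  obtain ⟨r, hr⟩ := hgraft.exists_root
  have hrm := hgraft.lt_of_mem_roots_of_mem_maxNodes hr hm
  rcases hγ.2.2 G hG E hE (Ne.symm hEG) r hr rE hrE with
    hinc | ⟨m', hm', hle⟩ | ⟨m', hm', hle⟩
  · exact absurd (T.le_or_le_of_le_of_le (T.le_of_lt hrm) (T.le_of_lt hlt))
      (not_or.2 ⟨hinc.2.2.1, hinc.2.2.2⟩)
  · exact ⟨m', hm', T.le_trans hle (T.le_of_lt hrm)⟩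
  · have hm'm := T.lt_of_le_of_lt hle hlt
    have hne : m' ≠ m := fun h => T.lt_irrefl m (h ▸ hm'm)
    exact absurd (T.le_of_lt hm'm) (hgraft.incomp_of_mem_maxNodes hm' hm hne).2.2.1

theorem ConsistentGrafts.nodes_subset_hybridNodes (hγ : ConsistentGrafts T γ) (hG : G ∈ γ) :
    G.nodes ⊆ hybridNodes T γ := by
  intro u hu
  rcases mem_roots_or_mem_implant_or_mem_maxNodes hu with hr | hi | hm
  · exact Or.inl (hγ.roots_subset_supp hG hr)
  · exact Or.inr (Set.mem_biUnion hG hi)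
  · exact Or.inl (hγ.maxNodes_subset_supp hG hm)

theorem ConsistentGrafts.hybridLt_of_lt (hγ : ConsistentGrafts T γ) (hG : G ∈ γ)
    (h : G.lt x y) : hybridLt T γ x y :=
  .single ⟨hγ.nodes_subset_hybridNodes hG (G.lt_mem_left h),
    hγ.nodes_subset_hybridNodes hG (G.lt_mem_right h), Or.inr ⟨G, hG, h⟩⟩

end Hybrid

section Shadow

variable {T G : STree α} {γ : Set (STree α)} {u v y a b m : α}

def IsShadow (T : STree α) (γ : Set (STree α)) (u a : α) : Prop :=
  (u ∈ T.nodes ∧ a = u) ∨ ∃ G ∈ γ, u ∈ implant G ∧ a ∈ G.roots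

theorem exists_isShadow (hγ : ConsistentGrafts T γ) (hu : u ∈ hybridNodes T γ) :
    ∃ a, IsShadow T γ u a := by
  rcases hu with hs | hi
  · exact ⟨u, Or.inl ⟨hs.1, rfl⟩⟩
  · obtain ⟨G, hG, huG⟩ := Set.mem_iUnion₂.1 hi
    obtain ⟨r, hr⟩ := (hγ.isGraft hG).exists_root
    exact ⟨r, Or.inr ⟨G, hG, huG, hr⟩⟩

theorem IsShadow.eq_of_mem_nodes (hγ : ConsistentGrafts T γ) (h : IsShadow T γ u a)
    (hu : u ∈ T.nodes) : a = u := by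
  rcases h with ⟨_, rfl⟩ | ⟨G, hG, hi, _⟩
  exacts [rfl, absurd hu ((hγ.isGraft hG).not_mem_nodes_of_mem_implant hi)]

theorem IsShadow.mem_roots (hγ : ConsistentGrafts T γ) (hG : G ∈ γ) (h : IsShadow T γ u a)
    (hu : u ∈ implant G) : a ∈ G.roots := by
  rcases h with ⟨huT, _⟩ | ⟨G', hG', hu', ha⟩
  · exact absurd huT ((hγ.isGraft hG).not_mem_nodes_of_mem_implant hu)
  · exact hγ.eq_of_mem_implant hG' hG hu' hu ▸ ha

theorem IsShadow.le_of_hybridBase (hγ : ConsistentGrafts T γ) (h : hybridBase T γ u v)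
    (ha : IsShadow T γ u a) (hb : IsShadow T γ v b) : T.le a b := by
  rcases h.2.2 with hT | ⟨G, hG, hlt⟩
  · rw [ha.eq_of_mem_nodes hγ (T.lt_mem_left hT), hb.eq_of_mem_nodes hγ (T.lt_mem_right hT)]
    exact T.le_of_lt hT
  have hgraft := hγ.isGraft hG
  have hu := G.lt_mem_left hlt
  have hum : u ∉ G.maxNodes := fun hm => hm.2 v hlt
  have har : a ∈ G.roots := by
    by_cases huT : u ∈ T.nodes
    · exact ha.eq_of_mem_nodes hγ huT ▸ hgraft.mem_roots_of_mem_nodes hu hum huT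
    · exact ha.mem_roots hγ hG (hgraft.mem_implant_of_mem_nodes hu hum huT)
  rcases mem_roots_or_mem_implant_or_mem_maxNodes (G.lt_mem_right hlt) with hr | hi | hm
  · exact absurd hlt (G.not_lt_of_mem_roots hr)
  · exact G.eq_of_mem_roots har (hb.mem_roots hγ hG hi) ▸ T.le_refl (hgraft.roots_subset har)
  · rw [hb.eq_of_mem_nodes hγ (hgraft.maxNodes_subset hm)]
    exact T.le_of_lt (hgraft.lt_of_mem_roots_of_mem_maxNodes har hm)

theorem IsShadow.le_of_hybridLt (hγ : ConsistentGrafts T γ) (h : hybridLt T γ u v)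
    (ha : IsShadow T γ u a) (hb : IsShadow T γ v b) : T.le a b := by
  induction h generalizing b with
  | single h => exact ha.le_of_hybridBase hγ h hb
  | tail _ hstep ih =>
    obtain ⟨c, hc⟩ := exists_isShadow hγ hstep.1
    exact T.le_trans (ih hc) (hc.le_of_hybridBase hγ hstep hb)

theorem eq_of_hybridLt_of_mem_maxNodes (hγ : ConsistentGrafts T γ) (hG : G ∈ γ)
    (hm : m ∈ G.maxNodes) (hy : y ∈ G.nodes) (h : hybridLt T γ m y) : y = m := by
  have hgraft := hγ.isGraft hG
  have hmT := hgraft.maxNodes_subset hm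
  have hshadow : ∀ {b}, IsShadow T γ y b → T.le m b :=
    fun hb => IsShadow.le_of_hybridLt hγ h (Or.inl ⟨hmT, rfl⟩) hb
  rcases mem_roots_or_mem_implant_or_mem_maxNodes hy with hr | hi | hm'
  · exact absurd (T.lt_of_le_of_lt (hshadow (Or.inl ⟨hgraft.roots_subset hr, rfl⟩))
      (hgraft.lt_of_mem_roots_of_mem_maxNodes hr hm)) (T.lt_irrefl m)
  · obtain ⟨r, hr⟩ := hgraft.exists_root
    exact absurd (T.lt_of_le_of_lt (hshadow (Or.inr ⟨G, hG, hi, hr⟩))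
      (hgraft.lt_of_mem_roots_of_mem_maxNodes hr hm)) (T.lt_irrefl m)
  · by_contra hne
    exact (hgraft.incomp_of_mem_maxNodes hm hm' (Ne.symm hne)).2.2.1
      (hshadow (Or.inl ⟨hgraft.maxNodes_subset hm', rfl⟩))

end Shadow

section Exit

variable {T G : STree α} {γ : Set (STree α)} {x y z : α}

theorem lt_or_exists_maxNodes_of_hybridBase (hγ : ConsistentGrafts T γ) (hG : G ∈ γ)
    (hx : x ∈ G.nodes) (h : hybridBase T γ x z) :
    (z ∈ G.nodes ∧ G.lt x z) ∨
      ∃ m ∈ G.maxNodes, G.le x m ∧ Relation.ReflTransGen (hybridBase T γ) m z := by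
  have hgraft := hγ.isGraft hG
  by_cases hm : x ∈ G.maxNodes
  · exact Or.inr ⟨x, hm, G.le_refl hx, .single h⟩
  rcases h.2.2 with hT | ⟨G', hG', hlt⟩
  · have hr := hgraft.mem_roots_of_mem_nodes hx hm (T.lt_mem_left hT)
    obtain ⟨m, hm, hmz⟩ := (mem_supp_iff.1 (hγ.mem_supp_of_mem_hybridNodes h.2.1
      (T.lt_mem_right hT))).2 G hG x hr hT
    refine Or.inr ⟨m, hm, hr.2 m hm.1, ?_⟩
    rcases hmz with hmz | ⟨rfl, _⟩
    · exact .single ⟨Or.inl (hγ.maxNodes_subset_supp hG hm), h.2.1, Or.inl hmz⟩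
    · exact .refl
  · have hxG' := G'.lt_mem_left hlt
    have hxm' : x ∉ G'.maxNodes := fun hm' => hm'.2 z hlt
    obtain rfl : G' = G := by
      by_cases hxT : x ∈ T.nodes
      · exact hγ.eq_of_mem_roots hG' hG
          ((hγ.isGraft hG').mem_roots_of_mem_nodes hxG' hxm' hxT)
          (hgraft.mem_roots_of_mem_nodes hx hm hxT)
      · exact hγ.eq_of_mem_implant hG' hG
          ((hγ.isGraft hG').mem_implant_of_mem_nodes hxG' hxm' hxT)
          (hgraft.mem_implant_of_mem_nodes hx hm hxT)
    exact Or.inl ⟨G'.lt_mem_right hlt, hlt⟩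

theorem lt_or_exists_maxNodes_of_hybridLt (hγ : ConsistentGrafts T γ) (hG : G ∈ γ)
    (hx : x ∈ G.nodes) (h : hybridLt T γ x y) :
    (y ∈ G.nodes ∧ G.lt x y) ∨
      ∃ m ∈ G.maxNodes, G.le x m ∧ Relation.ReflTransGen (hybridBase T γ) m y := by
  induction h with
  | single h => exact lt_or_exists_maxNodes_of_hybridBase hγ hG hx h
  | tail _ hstep ih =>
    rcases ih with ⟨hyG, hxy⟩ | ⟨m, hm, hxm, hmy⟩
    · rcases lt_or_exists_maxNodes_of_hybridBase hγ hG hyG hstep with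
        ⟨hzG, hyz⟩ | ⟨m, hm, hym, hmz⟩
      · exact Or.inl ⟨hzG, G.lt_trans hxy hyz⟩
      · exact Or.inr ⟨m, hm, G.le_of_lt (G.lt_of_lt_of_le hxy hym), hmz⟩
    · exact Or.inr ⟨m, hm, hxm, hmy.tail hstep⟩

end Exit

def IsHybrid (T : STree α) (γ : Set (STree α)) (H : STree α) : Prop :=
  H.nodes = hybridNodes T γ ∧ ∀ x y, H.lt x y ↔ hybridLt T γ x y

namespace IsHybrid

variable {T G H : STree α} {γ : Set (STree α)} {B : Set α} {x y c : α}

theorem lt_of_graft_lt (hH : IsHybrid T γ H) (hγ : ConsistentGrafts T γ) (hG : G ∈ γ)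
    (h : G.lt x y) : H.lt x y :=
  (hH.2 x y).2 (hγ.hybridLt_of_lt hG h)

theorem le_of_graft_le (hH : IsHybrid T γ H) (hγ : ConsistentGrafts T γ) (hG : G ∈ γ)
    (h : G.le x y) : H.le x y := by
  rcases h with h | ⟨rfl, hx⟩
  · exact Or.inl (hH.lt_of_graft_lt hγ hG h)
  · exact H.le_refl (hH.1 ▸ hγ.nodes_subset_hybridNodes hG hx)

theorem graft_lt_of_lt (hH : IsHybrid T γ H) (hγ : ConsistentGrafts T γ) (hG : G ∈ γ)
    (hx : x ∈ G.nodes) (hy : y ∈ G.nodes) (h : H.lt x y) : G.lt x y := by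
  have hxy := (hH.2 x y).1 h
  rcases lt_or_exists_maxNodes_of_hybridLt hγ hG hx hxy with ⟨_, hlt⟩ | ⟨m, hm, hxm, hmy⟩
  · exact hlt
  obtain rfl : y = m := by
    rcases Relation.reflTransGen_iff_eq_or_transGen.1 hmy with rfl | hmy
    exacts [rfl, eq_of_hybridLt_of_mem_maxNodes hγ hG hm hy hmy]
  exact G.lt_of_le_of_ne hxm fun hxy => H.lt_irrefl x (hxy ▸ h)

theorem exists_maxNodes_of_lt (hH : IsHybrid T γ H) (hγ : ConsistentGrafts T γ) (hG : G ∈ γ)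
    (hx : x ∈ G.nodes) (hy : y ∉ G.nodes) (h : H.lt x y) :
    ∃ m ∈ G.maxNodes, G.le x m ∧ H.le m y := by
  rcases lt_or_exists_maxNodes_of_hybridLt hγ hG hx ((hH.2 x y).1 h) with
    ⟨hyG, _⟩ | ⟨m, hm, hxm, hmy⟩
  · exact absurd hyG hy
  refine ⟨m, hm, hxm, ?_⟩
  rcases Relation.reflTransGen_iff_eq_or_transGen.1 hmy with rfl | hmy
  exacts [absurd hm.1 hy, Or.inl ((hH.2 m y).2 hmy)]

theorem mem_branch_of_forall_le_or_le (hH : IsHybrid T γ H) (hγ : ConsistentGrafts T γ)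
    (hG : G ∈ γ) (hB : H.IsBranch B) (hx : x ∈ B ∩ G.nodes) (hc : c ∈ G.nodes)
    (hcomp : ∀ b ∈ B ∩ G.nodes, G.le b c ∨ G.le c b) : c ∈ B := by
  refine hB.mem_of_forall_le_or_le (hH.1 ▸ hγ.nodes_subset_hybridNodes hG hc) fun b hb => ?_
  by_cases hbG : b ∈ G.nodes
  · exact (hcomp b ⟨hb, hbG⟩).imp (hH.le_of_graft_le hγ hG) (hH.le_of_graft_le hγ hG)
  have hbx : b ≠ x := fun h => hbG (h ▸ hx.2)
  rcases hB.1.2 b hb x hx.1 with hbx' | hxb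
  · have hcx := (hcomp x hx).imp (hH.le_of_graft_le hγ hG) (hH.le_of_graft_le hγ hG)
    rcases hcx with hxc | hcx
    · exact Or.inl (H.le_trans hbx' hxc)
    · exact H.le_or_le_of_le_of_le hbx' hcx
  · obtain ⟨m, hm, hxm, hmb⟩ :=
      hH.exists_maxNodes_of_lt hγ hG hx.2 hbG (H.lt_of_le_of_ne hxb (Ne.symm hbx))
    have hmB : m ∈ B ∩ G.nodes := ⟨hB.mem_of_le hb hmb, hm.1⟩
    have hcm : G.le c m := by
      rcases hcomp m hmB with hmc | hcm
      exacts [G.eq_of_mem_maxNodes_of_le hm hmc ▸ G.le_refl hc, hcm]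
    exact Or.inr (H.le_trans (hH.le_of_graft_le hγ hG hcm) hmb)

theorem isBranch_inter_nodes (hH : IsHybrid T γ H) (hγ : ConsistentGrafts T γ) (hG : G ∈ γ)
    (hB : H.IsBranch B) (hne : (B ∩ G.nodes).Nonempty) : G.IsBranch (B ∩ G.nodes) := by
  have hlt : ∀ a ∈ B ∩ G.nodes, ∀ b ∈ B ∩ G.nodes, H.lt a b → G.lt a b :=
    fun a ha b hb => hH.graft_lt_of_lt hγ hG ha.2 hb.2
  refine ⟨⟨Set.inter_subset_right, fun a ha b hb => ?_⟩, fun C hC hBC => ?_⟩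
  · rcases hB.1.2 a ha.1 b hb.1 with h | h
    · exact Or.inl (h.imp (hlt a ha b hb) fun h => ⟨h.1, ha.2⟩)
    · exact Or.inr (h.imp (hlt b hb a ha) fun h => ⟨h.1, hb.2⟩)
  · obtain ⟨x, hx⟩ := hne
    refine hBC.antisymm fun c hcC => ⟨?_, hC.1 hcC⟩
    exact hH.mem_branch_of_forall_le_or_le hγ hG hB hx (hC.1 hcC)
      fun b hb => hC.2 b (hBC hb) c hcC

end IsHybrid

end STree

/-- If every graft of the consistent family `γ` has bounded chains
and `B` is a branch of the hybrid `H`, then `B ∩ supp(T,γ)` is H-cofinal in `B`,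
and for every `G ∈ γ` meeting `B`, the set `B ∩ nodes(G)` is a branch of `G`. -/
theorem hybrid_branch {α : Type u} (T : STree α) (γ : Set (STree α)) (H : STree α)
    (hγ : STree.ConsistentGrafts T γ)
    (hbc : ∀ G ∈ γ, STree.BoundedChains G)
    (hn : H.nodes = STree.hybridNodes T γ)
    (hlt : ∀ x y, H.lt x y ↔ STree.hybridLt T γ x y)
    (B : Set α) (hB : H.IsBranch B) :
    (∀ b ∈ B, ∃ a ∈ B ∩ STree.supp T γ, H.le b a) ∧
    (∀ G ∈ γ, (B ∩ G.nodes).Nonempty → G.IsBranch (B ∩ G.nodes)) := by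
  have hH : STree.IsHybrid T γ H := ⟨hn, hlt⟩
  have hbranch : ∀ G ∈ γ, (B ∩ G.nodes).Nonempty → G.IsBranch (B ∩ G.nodes) :=
    fun G hG => hH.isBranch_inter_nodes hγ hG hB
  refine ⟨fun b hb => ?_, hbranch⟩
  rcases hn ▸ hB.1.1 hb with hs | hi
  · exact ⟨b, ⟨hb, hs⟩, H.le_refl (hB.1.1 hb)⟩
  obtain ⟨G, hG, hbG⟩ := Set.mem_iUnion₂.1 hi
  have hbB : b ∈ B ∩ G.nodes := ⟨hb, hbG.1⟩
  have hGB := hbranch G hG ⟨b, hbB⟩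
  obtain ⟨z, hz, hzub⟩ := hbc G hG _ hGB.1 ⟨b, hbB⟩
  obtain ⟨hzB, hzmax⟩ := hGB.mem_maxNodes_of_forall_le hz hzub
  exact ⟨z, ⟨hzB.1, hγ.maxNodes_subset_supp hG hzmax⟩,
    hH.le_of_graft_le hγ hG (hzub b hbB)⟩
end

section
/- Let F be a nonincreasing foliage tree, φ a consistent family of foliage grafts for F, and H = fhybr(F,φ) the foliage hybrid. Then H is nonincreasing; if F and each G ∈ φ are splittable, then H is splittable; and if F and each G ∈ φ are open in a space X, then H is open in the subspace X \ loss(F,φ). -/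
universe u u' v

/-- The foliage hybrid `H = fhybr(F,φ)` of a nonincreasing foliage
tree and a consistent family of foliage grafts is nonincreasing; it is splittable
if `F` and all grafts are; and if `F` and all grafts are open in a space, then `H`
is open in the subspace obtained by removing the loss. -/
theorem foliage_hybrid_properties {α : Type u} {β : Type v} [TopologicalSpace β]
    (T : STree α) (leafF : α → Set β) (φ : Set (STree α × (α → Set β)))
    (H : STree α) (leafH : α → Set β)
    (hniF : STree.Nonincreasing T leafF)
    (hφ : STree.ConsistentFGrafts T leafF φ)
    (hn : H.nodes = STree.hybridNodes T (Prod.fst '' φ))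
    (hlt : ∀ x y, H.lt x y ↔ STree.hybridLt T (Prod.fst '' φ) x y)
    (hleafImp : ∀ p ∈ φ, ∀ x ∈ STree.implant p.1,
      leafH x = p.2 x \ STree.loss leafF φ)
    (hleafSupp : ∀ x ∈ STree.supp T (Prod.fst '' φ),
      leafH x = leafF x \ STree.loss leafF φ) :
    STree.Nonincreasing H leafH ∧
    ((STree.Splittable T leafF ∧ ∀ p ∈ φ, STree.Splittable p.1 p.2) →
      STree.Splittable H leafH) ∧
    ((STree.OpenLeaves T leafF ∧ ∀ p ∈ φ, STree.OpenLeaves p.1 p.2) →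
      ∀ x ∈ H.nodes, ∃ U : Set β, IsOpen U ∧
        leafH x = U ∩ (STree.loss leafF φ)ᶜ) := by
  classical
  obtain ⟨hfg, hneq, hg, hdisj, hcons⟩ := hφ
  set γ : Set (STree α) := Prod.fst '' φ with hγdef
  set L : Set β := STree.loss leafF φ with hLdef
  have le_iff : ∀ (S : STree α) (a b : α),
      S.le a b ↔ (S.lt a b ∨ (a = b ∧ a ∈ S.nodes)) := fun _ _ _ => Iff.rfl
  have hmemγ : ∀ p ∈ φ, p.1 ∈ γ := fun p hp => ⟨p, hp, rfl⟩
  have himpT : ∀ G ∈ γ, ∀ x ∈ STree.implant G, x ∉ T.nodes := by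
    intro G hG x hx hxT
    have h7 := (hg G hG).2.2.2.2.2.2
    have hmem : x ∈ STree.implant G ∩ T.nodes := ⟨hx, hxT⟩
    rw [h7] at hmem
    exact hmem
  have hsuppN : ∀ x ∈ STree.supp T γ, x ∈ H.nodes := by
    intro x hx; rw [hn]; exact Or.inl hx
  have himpN : ∀ G ∈ γ, ∀ x ∈ STree.implant G, x ∈ H.nodes := by
    intro G hG x hx; rw [hn]
    exact Or.inr (Set.mem_iUnion₂.mpr ⟨G, hG, hx⟩)
  have hTsupp : ∀ x ∈ H.nodes, x ∈ T.nodes → x ∈ STree.supp T γ := by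
    intro x hx hxT
    rw [hn] at hx
    rcases hx with h | h
    · exact h
    · rcases Set.mem_iUnion₂.mp h with ⟨G, hG, hxG⟩
      exact absurd hxT (himpT G hG x hxG)
  have hcases : ∀ x ∈ H.nodes, x ∈ STree.supp T γ ∨ ∃ p ∈ φ, x ∈ STree.implant p.1 := by
    intro x hx
    rw [hn] at hx
    rcases hx with h | h
    · exact Or.inl h
    · rcases Set.mem_iUnion₂.mp h with ⟨G, hG, hxG⟩
      rcases hG with ⟨p, hp, rfl⟩
      exact Or.inr ⟨p, hp, hxG⟩
  have hrootu : ∀ (G : STree α), ∀ r ∈ G.roots, ∀ r' ∈ G.roots, r = r' := by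
    intro G r hr r' hr'
    rcases (le_iff G r r').mp (hr.2 r' hr'.1) with h | ⟨h, -⟩
    · rcases (le_iff G r' r).mp (hr'.2 r hr.1) with h' | ⟨h', -⟩
      · exact absurd (G.lt_trans h h') (G.lt_irrefl r)
      · exact h'.symm
    · exact h
  have hroot_lt_imp : ∀ (G : STree α), ∀ r ∈ G.roots, ∀ x ∈ STree.implant G, G.lt r x := by
    intro G r hr x hx
    rcases (le_iff G r x).mp (hr.2 x hx.1) with h | ⟨h, -⟩
    · exact h
    · exact absurd (Set.mem_union_left _ (h ▸ hr)) hx.2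
  have hnodecases : ∀ (G : STree α), ∀ x ∈ G.nodes,
      x ∈ G.roots ∨ x ∈ G.maxNodes ∨ x ∈ STree.implant G := by
    intro G x hx
    by_cases h : x ∈ G.roots ∪ G.maxNodes
    · rcases h with h | h
      · exact Or.inl h
      · exact Or.inr (Or.inl h)
    · exact Or.inr (Or.inr ⟨hx, h⟩)
  have hlt_not_root : ∀ (G : STree α), ∀ {x y : α}, G.lt x y → y ∉ G.roots := by
    intro G x y h hy
    rcases (le_iff G y x).mp (hy.2 x (G.lt_mem_left h)) with h' | ⟨h', -⟩
    · exact G.lt_irrefl x (G.lt_trans h h')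
    · exact G.lt_irrefl x (h' ▸ h)
  have hrootsupp : ∀ G ∈ γ, ∀ r ∈ G.roots, r ∈ STree.supp T γ := by
    intro G hG r hr
    refine ⟨(hg G hG).2.2.1 hr, ?_⟩
    intro hmem
    rcases Set.mem_iUnion₂.mp hmem with ⟨E, hE, hrE⟩
    obtain ⟨⟨rE, hrE', hltE⟩, hnot⟩ := hrE
    by_cases hEG : E = G
    · subst hEG
      have := hrootu E rE hrE' r hr
      subst this
      exact T.lt_irrefl rE hltE
    · rcases hcons G hG E hE (fun h => hEG h.symm) r hr rE hrE' with
        hI | ⟨m, hm, hmle⟩ | ⟨m, hm, hmle⟩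
      · exact hI.2.2.2 (Or.inl hltE)
      · exact hnot (Set.mem_iUnion₂.mpr ⟨m, hm, hmle⟩)
      · have h5 := (hg G hG).2.2.2.2.1 r hr m hm
        rcases (le_iff T m rE).mp hmle with h | ⟨h, -⟩
        · exact T.lt_irrefl m (T.lt_trans (T.lt_trans h hltE) h5)
        · exact T.lt_irrefl m (T.lt_trans (by rw [h]; exact hltE) h5)
  have hmaxsupp : ∀ G ∈ γ, ∀ m ∈ G.maxNodes, m ∈ STree.supp T γ := by
    intro G hG m hm
    have hmT : m ∈ T.nodes := (hg G hG).2.2.2.1 hm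
    refine ⟨hmT, ?_⟩
    intro hmem
    rcases Set.mem_iUnion₂.mp hmem with ⟨E, hE, hmE⟩
    obtain ⟨⟨rE, hrE, hltE⟩, hnot⟩ := hmE
    by_cases hEG : E = G
    · subst hEG
      exact hnot (Set.mem_iUnion₂.mpr ⟨m, hm, Or.inr ⟨rfl, hmT⟩⟩)
    · obtain ⟨rG, hrG⟩ := (hg G hG).2.1
      have hrG' : rG ∈ G.roots := hrG
      have hltG : T.lt rG m := (hg G hG).2.2.2.2.1 rG hrG' m hm
      rcases hcons G hG E hE (fun h => hEG h.symm) rG hrG' rE hrE with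
        hI | ⟨mE, hmE', hmle⟩ | ⟨m'', hm'', hmle⟩
      · rcases T.pred_linear hltG hltE with h | h | h
        · exact hI.2.2.1 (Or.inl h)
        · exact hI.2.2.1 (Or.inr ⟨h, T.lt_mem_left hltG⟩)
        · exact hI.2.2.2 (Or.inl h)
      · have hltm : T.lt mE m := by
          rcases (le_iff T mE rG).mp hmle with h | ⟨h, -⟩
          · exact T.lt_trans h hltG
          · rw [h]; exact hltG
        exact hnot (Set.mem_iUnion₂.mpr ⟨mE, hmE', Or.inl hltm⟩)
      · have hlt'' : T.lt m'' m := by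
          rcases (le_iff T m'' rE).mp hmle with h | ⟨h, -⟩
          · exact T.lt_trans h hltE
          · rw [h]; exact hltE
        by_cases hmm : m'' = m
        · exact T.lt_irrefl m (hmm ▸ hlt'')
        · exact ((hg G hG).2.2.2.2.2.1 m'' hm'' m hm hmm).2.2.1 (Or.inl hlt'')
  have himpLeaf : ∀ p ∈ φ, ∀ x ∈ STree.implant p.1, ∀ r ∈ p.1.roots, p.2 x ⊆ leafF r := by
    intro p hp x hx r hr
    have h1 : p.2 x ⊆ p.2 r := (hfg p hp).1 (Or.inl (hroot_lt_imp p.1 r hr x hx))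
    exact h1.trans ((hfg p hp).2.2.1 r hr)
  have hleafSub : ∀ x ∈ STree.supp T γ, leafH x ⊆ leafF x := by
    intro x hx
    rw [hleafSupp x hx]; exact Set.diff_subset
  have hleafSubI : ∀ p ∈ φ, ∀ x ∈ STree.implant p.1, leafH x ⊆ p.2 x := by
    intro p hp x hx
    rw [hleafImp p hp x hx]; exact Set.diff_subset
  have hnodes' : ∀ {a : α}, a ∈ H.nodes → a ∈ STree.hybridNodes T γ := by
    intro a ha; rwa [hn] at ha
  have hbT : ∀ {a b : α}, a ∈ H.nodes → b ∈ H.nodes → T.lt a b → STree.hybridBase T γ a b :=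
    fun ha hb h => ⟨hnodes' ha, hnodes' hb, Or.inl h⟩
  have hbG : ∀ G ∈ γ, ∀ {a b : α}, a ∈ H.nodes → b ∈ H.nodes → G.lt a b →
      STree.hybridBase T γ a b := by
    intro G hG a b ha hb h
    exact ⟨hnodes' ha, hnodes' hb, Or.inr ⟨G, hG, h⟩⟩
  have hHlt : ∀ {a b : α}, Relation.TransGen (STree.hybridBase T γ) a b → H.le a b :=
    fun h => Or.inl ((hlt _ _).mpr h)
  have hbase_mono : ∀ a b, STree.hybridBase T γ a b → leafH b ⊆ leafH a := by
    intro a b hab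
    obtain ⟨haN, hbN, hor⟩ := hab
    have haH : a ∈ H.nodes := by rw [hn]; exact haN
    have hbH : b ∈ H.nodes := by rw [hn]; exact hbN
    rcases hor with h | ⟨G, hG, h⟩
    · have ha : a ∈ STree.supp T γ := hTsupp a haH (T.lt_mem_left h)
      have hb : b ∈ STree.supp T γ := hTsupp b hbH (T.lt_mem_right h)
      rw [hleafSupp a ha, hleafSupp b hb]
      exact Set.diff_subset_diff_left (hniF (Or.inl h))
    · obtain ⟨p, hp, rfl⟩ := hG
      have hsub : p.2 b ⊆ p.2 a := (hfg p hp).1 (Or.inl h)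
      have hbleaf : leafH b = p.2 b \ L := by
        rcases hnodecases p.1 b (p.1.lt_mem_right h) with hb | hb | hb
        · exact absurd hb (hlt_not_root p.1 h)
        · rw [hleafSupp b (hmaxsupp p.1 (hmemγ p hp) b hb), (hfg p hp).2.2.2 b hb]
        · exact hleafImp p hp b hb
      rcases hnodecases p.1 a (p.1.lt_mem_left h) with ha | ha | ha
      · rw [hleafSupp a (hrootsupp p.1 (hmemγ p hp) a ha), hbleaf]
        exact Set.diff_subset_diff_left (hsub.trans ((hfg p hp).2.2.1 a ha))
      · exact absurd h (ha.2 b)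
      · rw [hleafImp p hp a ha, hbleaf]
        exact Set.diff_subset_diff_left hsub
  have part1 : STree.Nonincreasing H leafH := by
    intro x y hxy
    rcases (le_iff H x y).mp hxy with h | ⟨rfl, -⟩
    · have h' := (hlt x y).mp h
      clear h hxy
      induction h' with
      | single hb => exact hbase_mono _ _ hb
      | tail _ hb ih => exact (hbase_mono _ _ hb).trans ih
    · exact subset_rfl
  have part2 : (STree.Splittable T leafF ∧ ∀ p ∈ φ, STree.Splittable p.1 p.2) →
      STree.Splittable H leafH := by
    rintro ⟨hsT, hsφ⟩
    have hdisj_of : ∀ {A B C D : Set β}, A ⊆ C → B ⊆ D → C ∩ D = ∅ → A ∩ B = ∅ := by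
      intro A B C D h1 h2 h3
      apply Set.eq_empty_iff_forall_notMem.mpr
      intro b hb
      have hb' : b ∈ C ∩ D := ⟨h1 hb.1, h2 hb.2⟩
      rw [h3] at hb'
      exact hb'
    have hmixed : ∀ x, x ∈ STree.supp T γ → ∀ q ∈ φ, ∀ y ∈ STree.implant q.1,
        ¬ H.le x y → ¬ H.le y x → leafH x ∩ leafH y = ∅ := by
      intro x hxs q hq y hy hnxy hnyx
      obtain ⟨rq, hrq⟩ := (hg q.1 (hmemγ q hq)).2.1
      have hrq' : rq ∈ q.1.roots := hrq
      have hxN : x ∈ H.nodes := hsuppN x hxs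
      have hyN : y ∈ H.nodes := himpN q.1 (hmemγ q hq) y hy
      have hrqN : rq ∈ H.nodes := hsuppN rq (hrootsupp q.1 (hmemγ q hq) rq hrq')
      have hrq_lt_y : q.1.lt rq y := hroot_lt_imp q.1 rq hrq' y hy
      by_cases h1 : T.le x rq
      · exfalso
        apply hnxy
        rcases (le_iff T x rq).mp h1 with h | ⟨rfl, -⟩
        · exact hHlt (Relation.TransGen.tail (Relation.TransGen.single (hbT hxN hrqN h))
            (hbG q.1 (hmemγ q hq) hrqN hyN hrq_lt_y))
        · exact hHlt (Relation.TransGen.single (hbG q.1 (hmemγ q hq) hxN hyN hrq_lt_y))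
      · by_cases h2 : T.lt rq x
        · have hxnotex : x ∉ STree.explant T q.1 := by
            intro hc
            exact hxs.2 (Set.mem_iUnion₂.mpr ⟨q.1, hmemγ q hq, hc⟩)
          have hxm : ∃ m ∈ q.1.maxNodes, T.le m x := by
            by_contra hc
            apply hxnotex
            refine ⟨⟨rq, hrq', h2⟩, ?_⟩
            intro hmem
            rcases Set.mem_iUnion₂.mp hmem with ⟨m, hm, hle⟩
            exact hc ⟨m, hm, hle⟩
          obtain ⟨m, hm, hmx⟩ := hxm
          have hmN : m ∈ H.nodes := hsuppN m (hmaxsupp q.1 (hmemγ q hq) m hm)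
          by_cases h3 : q.1.le y m
          · exfalso
            apply hnyx
            have hylt : q.1.lt y m := by
              rcases (le_iff q.1 y m).mp h3 with h | ⟨rfl, -⟩
              · exact h
              · exact absurd (Set.mem_union_right _ hm) hy.2
            have step1 : Relation.TransGen (STree.hybridBase T γ) y m :=
              Relation.TransGen.single (hbG q.1 (hmemγ q hq) hyN hmN hylt)
            rcases (le_iff T m x).mp hmx with h | ⟨rfl, -⟩
            · exact hHlt (step1.tail (hbT hmN hxN h))
            · exact hHlt step1
          · have h4 : ¬ q.1.le m y := by
              intro h
              rcases (le_iff q.1 m y).mp h with h | ⟨rfl, -⟩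
              · exact hm.2 y h
              · exact hy.2 (Set.mem_union_right _ hm)
            have hdq : q.2 y ∩ q.2 m = ∅ := hsφ q hq ⟨hy.1, hm.1, h3, h4⟩
            have hxsub : leafH x ⊆ q.2 m := by
              rw [(hfg q hq).2.2.2 m hm]
              exact (hleafSub x hxs).trans (hniF hmx)
            rw [Set.inter_comm]
            exact hdisj_of (hleafSubI q hq y hy) hxsub hdq
        · have hincT : T.Incomp x rq := by
            refine ⟨hxs.1, (hg q.1 (hmemγ q hq)).2.2.1 hrq', h1, ?_⟩
            intro h
            rcases (le_iff T rq x).mp h with h | ⟨h, -⟩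
            · exact h2 h
            · exact h1 (Or.inr ⟨h.symm, hxs.1⟩)
          exact hdisj_of (hleafSub x hxs)
            ((hleafSubI q hq y hy).trans (himpLeaf q hq y hy rq hrq'))
            (hsT hincT)
    have hcross : ∀ p ∈ φ, ∀ q ∈ φ, ∀ x ∈ STree.implant p.1, ∀ y ∈ STree.implant q.1,
        ∀ rp ∈ p.1.roots, (∃ m ∈ q.1.maxNodes, T.le m rp) → ¬ H.le y x →
        leafH x ∩ leafH y = ∅ := by
      intro p hp q hq x hx y hy rp hrp hex hnyx
      obtain ⟨m, hm, hmle⟩ := hex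
      have hxN : x ∈ H.nodes := himpN p.1 (hmemγ p hp) x hx
      have hyN : y ∈ H.nodes := himpN q.1 (hmemγ q hq) y hy
      have hmN : m ∈ H.nodes := hsuppN m (hmaxsupp q.1 (hmemγ q hq) m hm)
      have hrpN : rp ∈ H.nodes := hsuppN rp (hrootsupp p.1 (hmemγ p hp) rp hrp)
      have hrp_lt_x : p.1.lt rp x := hroot_lt_imp p.1 rp hrp x hx
      by_cases h3 : q.1.le y m
      · exfalso
        apply hnyx
        have hylt : q.1.lt y m := by
          rcases (le_iff q.1 y m).mp h3 with h | ⟨rfl, -⟩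
          · exact h
          · exact absurd (Set.mem_union_right _ hm) hy.2
        have step1 : Relation.TransGen (STree.hybridBase T γ) y m :=
          Relation.TransGen.single (hbG q.1 (hmemγ q hq) hyN hmN hylt)
        rcases (le_iff T m rp).mp hmle with h | ⟨heq, -⟩
        · exact hHlt ((step1.tail (hbT hmN hrpN h)).tail
            (hbG p.1 (hmemγ p hp) hrpN hxN hrp_lt_x))
        · subst heq
          exact hHlt (step1.tail (hbG p.1 (hmemγ p hp) hmN hxN hrp_lt_x))
      · have h4 : ¬ q.1.le m y := by
          intro h
          rcases (le_iff q.1 m y).mp h with h | ⟨rfl, -⟩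
          · exact hm.2 y h
          · exact hy.2 (Set.mem_union_right _ hm)
        have hdq : q.2 y ∩ q.2 m = ∅ := hsφ q hq ⟨hy.1, hm.1, h3, h4⟩
        have hxsub : leafH x ⊆ q.2 m := by
          rw [(hfg q hq).2.2.2 m hm]
          exact ((hleafSubI p hp x hx).trans (himpLeaf p hp x hx rp hrp)).trans (hniF hmle)
        rw [Set.inter_comm]
        exact hdisj_of (hleafSubI q hq y hy) hxsub hdq
    intro x y hinc
    have hxN : x ∈ H.nodes := hinc.1
    have hyN : y ∈ H.nodes := hinc.2.1
    have hnxy : ¬ H.le x y := hinc.2.2.1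
    have hnyx : ¬ H.le y x := hinc.2.2.2
    have hxy : x ≠ y := by
      rintro rfl
      exact hnxy (Or.inr ⟨rfl, hxN⟩)
    rcases hcases x hxN with hxs | ⟨p, hp, hxi⟩
    · rcases hcases y hyN with hys | ⟨q, hq, hyi⟩
      · have hincT : T.Incomp x y := by
          refine ⟨hxs.1, hys.1, ?_, ?_⟩
          · intro h
            rcases (le_iff T x y).mp h with h | ⟨h, -⟩
            · exact hnxy (hHlt (Relation.TransGen.single (hbT hxN hyN h)))
            · exact hxy h
          · intro h
            rcases (le_iff T y x).mp h with h | ⟨h, -⟩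
            · exact hnyx (hHlt (Relation.TransGen.single (hbT hyN hxN h)))
            · exact hxy h.symm
        exact hdisj_of (hleafSub x hxs) (hleafSub y hys) (hsT hincT)
      · exact hmixed x hxs q hq y hyi hnxy hnyx
    · rcases hcases y hyN with hys | ⟨q, hq, hyi⟩
      · rw [Set.inter_comm]
        exact hmixed y hys p hp x hxi hnyx hnxy
      · by_cases hpq : p = q
        · subst hpq
          have hincP : p.1.Incomp x y := by
            refine ⟨hxi.1, hyi.1, ?_, ?_⟩
            · intro h
              rcases (le_iff p.1 x y).mp h with h | ⟨h, -⟩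
              · exact hnxy (hHlt (Relation.TransGen.single
                  (hbG p.1 (hmemγ p hp) hxN hyN h)))
              · exact hxy h
            · intro h
              rcases (le_iff p.1 y x).mp h with h | ⟨h, -⟩
              · exact hnyx (hHlt (Relation.TransGen.single
                  (hbG p.1 (hmemγ p hp) hyN hxN h)))
              · exact hxy h.symm
          exact hdisj_of (hleafSubI p hp x hxi) (hleafSubI p hp y hyi) (hsφ p hp hincP)
        · have hpq1 : p.1 ≠ q.1 := hneq p hp q hq hpq
          obtain ⟨rp, hrp⟩ := (hg p.1 (hmemγ p hp)).2.1
          obtain ⟨rq, hrq⟩ := (hg q.1 (hmemγ q hq)).2.1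
          have hrp' : rp ∈ p.1.roots := hrp
          have hrq' : rq ∈ q.1.roots := hrq
          rcases hcons p.1 (hmemγ p hp) q.1 (hmemγ q hq) hpq1 rp hrp' rq hrq' with
            hI | hex | hex
          · exact hdisj_of
              ((hleafSubI p hp x hxi).trans (himpLeaf p hp x hxi rp hrp'))
              ((hleafSubI q hq y hyi).trans (himpLeaf q hq y hyi rq hrq'))
              (hsT hI)
          · exact hcross p hp q hq x hxi y hyi rp hrp' hex hnyx
          · rw [Set.inter_comm]
            exact hcross q hq p hp y hyi x hxi rq hrq' hex hnxy
  have part3 : (STree.OpenLeaves T leafF ∧ ∀ p ∈ φ, STree.OpenLeaves p.1 p.2) →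
      ∀ x ∈ H.nodes, ∃ U : Set β, IsOpen U ∧ leafH x = U ∩ Lᶜ := by
    rintro ⟨hoT, hoφ⟩ x hx
    rcases hcases x hx with h | ⟨p, hp, h⟩
    · exact ⟨leafF x, hoT x h.1, by rw [hleafSupp x h, Set.diff_eq]⟩
    · exact ⟨p.2 x, hoφ p hp x h.1, by rw [hleafImp p hp x h, Set.diff_eq]⟩
  exact ⟨part1, part2, part3⟩
end
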